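/- For every x ∈ ℝ one has (W^{(α,ν)}(x))^{−1} W^{(α,ν+1)}(x) = d^{(ν)} ( J + ½((A^α)^*)² − x (A^α)^* ) + c^{(ν)} I; in particular Φ^{(α,ν)}(x) := (W^{(α,ν)}(x))^{−1} W^{(α,ν+1)}(x) is a matrix-valued polynomial of degree one in x. -/
import Mathlib


open Polynomial Matrix MeasureTheory

/-- Physicists' Hermite polynomials `H_n`, with generating function `exp (2xt - t²)`;
equivalently `H_0 = 1`, `H_{n+1}(x) = 2x H_n(x) - H_n'(x)`. -/
noncomputable def physHermite : ℕ → Polynomial ℂ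
  | 0 => 1
  | n + 1 => Polynomial.C 2 * Polynomial.X * physHermite n -
      Polynomial.derivative (physHermite n)

/-- The lower triangular matrix `L(x)` with entries `L(x)_{m,n} = H_{m-n}(x)/(m-n)!`. -/
noncomputable def Lmat (N : ℕ) (z : ℂ) : Matrix (Fin N) (Fin N) ℂ :=
  Matrix.of fun m n =>
    if (n : ℕ) ≤ (m : ℕ) then
      (physHermite ((m : ℕ) - (n : ℕ))).eval z / (Nat.factorial ((m : ℕ) - (n : ℕ)) : ℂ)
    else 0

/-- The matrix `A = 2 ∑_{j=2}^N E_{j,j-1}`. -/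
def Amat (N : ℕ) : Matrix (Fin N) (Fin N) ℂ :=
  Matrix.of fun m n => if (m : ℕ) = (n : ℕ) + 1 then 2 else 0

/-- The diagonal matrix `J = diag(1, 2, …, N)`. -/
def Jmat (N : ℕ) : Matrix (Fin N) (Fin N) ℂ :=
  Matrix.diagonal fun k => ((k : ℕ) + 1 : ℂ)

/-- `S^α = diag(α_1, …, α_N)`. -/
noncomputable def Smat {N : ℕ} (α : Fin N → ℝ) : Matrix (Fin N) (Fin N) ℂ :=
  Matrix.diagonal fun k => (α k : ℂ)

/-- `L^α(x) = S^α L(x) (S^α)⁻¹`. -/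
noncomputable def LmatAlpha {N : ℕ} (α : Fin N → ℝ) (x : ℝ) : Matrix (Fin N) (Fin N) ℂ :=
  Smat α * Lmat N (x : ℂ) * (Smat α)⁻¹

/-- `A^α = S^α A (S^α)⁻¹`. -/
noncomputable def AmatAlpha {N : ℕ} (α : Fin N → ℝ) : Matrix (Fin N) (Fin N) ℂ :=
  Smat α * Amat N * (Smat α)⁻¹

/-- The weight `W^{(α,ν)}(x) = e^{-x²} L^α(x) Δ (L^α(x))^*` where `Δ = diag(δ_1, …, δ_N)`. -/
noncomputable def Wmat {N : ℕ} (α : Fin N → ℝ) (δ : Fin N → ℝ) (x : ℝ) :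
    Matrix (Fin N) (Fin N) ℂ :=
  (Real.exp (-x ^ 2) : ℂ) •
    (LmatAlpha α x * Matrix.diagonal (fun k => (δ k : ℂ)) * (LmatAlpha α x)ᴴ)

/-- Evaluation of a matrix-valued polynomial at a real point. -/
noncomputable def evalM {N : ℕ} (P : Polynomial (Matrix (Fin N) (Fin N) ℂ)) (x : ℝ) :
    Matrix (Fin N) (Fin N) ℂ :=
  Polynomial.eval ((x : ℂ) • (1 : Matrix (Fin N) (Fin N) ℂ)) P

/-- Entrywise integral over `ℝ` (Lebesgue measure) of a matrix-valued function. -/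
noncomputable def mInt {N : ℕ} (f : ℝ → Matrix (Fin N) (Fin N) ℂ) :
    Matrix (Fin N) (Fin N) ℂ :=
  Matrix.of fun i j => ∫ x : ℝ, f x i j

/-- Rising factorial (Pochhammer symbol) `(a)_k = a (a+1) ⋯ (a+k-1)`. -/
noncomputable def risingFactorial (a : ℂ) (k : ℕ) : ℂ :=
  ∏ i ∈ Finset.range k, (a + i)

/-- `P` is the monic matrix-valued orthogonal polynomial of degree `n`
for the weight `Wf`: it is monic of degree `n` and `∫ P(x) Wf(x) xᵖ dx = 0` for `p < n`. -/
def IsMonicOrthPoly {N : ℕ} (Wf : ℝ → Matrix (Fin N) (Fin N) ℂ) (n : ℕ)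
    (P : Polynomial (Matrix (Fin N) (Fin N) ℂ)) : Prop :=
  P.Monic ∧ P.natDegree = n ∧
    ∀ p < n, mInt (fun x => (x : ℂ) ^ p • (evalM P x * Wf x)) = 0

lemma physHermite_succ (n : ℕ) : physHermite (n+1) = Polynomial.C 2 * Polynomial.X * physHermite n -
      Polynomial.derivative (physHermite n) := rfl

lemma deriv_physHermite (n : ℕ) :
    Polynomial.derivative (physHermite (n+1)) = Polynomial.C (2*(n+1) : ℂ) * physHermite n := by
  induction n with
  | zero => simp [physHermite]
  | succ n ih =>
    have step : Polynomial.derivative (physHermite (n+2)) =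
        Polynomial.C 2 * physHermite (n+1) +
          Polynomial.C (2*(n+1) : ℂ) * (Polynomial.C 2 * Polynomial.X * physHermite n -
            Polynomial.derivative (physHermite n)) := by
      rw [physHermite_succ (n+1), derivative_sub, ih, derivative_mul, derivative_mul,
        derivative_C, derivative_X, derivative_mul, derivative_C, ih]
      ring
    rw [step, ← physHermite_succ]
    push_cast
    rw [show (2*((n:ℂ)+1+1)) = 2 + 2*((n:ℂ)+1) by ring, map_add]
    ring

lemma physHermite_rec (n : ℕ) :
    physHermite (n+2) = Polynomial.C 2 * Polynomial.X * physHermite (n+1) -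
      Polynomial.C (2*(n+1) : ℂ) * physHermite n := by
  rw [physHermite_succ (n+1), deriv_physHermite]

noncomputable def hfun (z : ℂ) (k : ℕ) : ℂ := (physHermite k).eval z / (Nat.factorial k : ℂ)

lemma hfun_zero (z : ℂ) : hfun z 0 = 1 := by simp [hfun, physHermite]

lemma hfun_one (z : ℂ) : hfun z 1 = 2*z := by
  simp [hfun, physHermite_succ, physHermite]

lemma hfun_rec (z : ℂ) (k : ℕ) :
    ((k:ℂ)+2) * hfun z (k+2) + 2*hfun z k = 2*z*hfun z (k+1) := by
  have e2 : (physHermite (k+2)).eval z =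
      2*z*(physHermite (k+1)).eval z - 2*((k:ℂ)+1)*(physHermite k).eval z := by
    rw [physHermite_rec]
    push_cast
    simp [eval_sub, eval_mul, eval_C, eval_X]
  have f0 : (Nat.factorial k : ℂ) ≠ 0 := by
    exact_mod_cast Nat.cast_ne_zero.mpr (Nat.factorial_ne_zero k)
  have f1 : ((k+1).factorial : ℂ) = ((k:ℂ)+1) * k.factorial := by
    push_cast [Nat.factorial_succ]; ring
  have f2 : ((k+2).factorial : ℂ) = ((k:ℂ)+2) * (((k:ℂ)+1) * k.factorial) := by
    push_cast [Nat.factorial_succ]; ring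
  have g1 : ((k:ℂ)+1) ≠ 0 := Nat.cast_add_one_ne_zero k
  have g2 : ((k:ℂ)+2) ≠ 0 := by
    have : ((k:ℂ)+2) = ((k+2:ℕ):ℂ) := by push_cast; ring
    rw [this]
    exact Nat.cast_ne_zero.mpr (by omega)
  unfold hfun
  rw [e2, f2, f1]
  field_simp
  ring

lemma Lmat_apply (N : ℕ) (z : ℂ) (m n : Fin N) :
    Lmat N z m n = if (n : ℕ) ≤ (m : ℕ) then hfun z ((m:ℕ) - (n:ℕ)) else 0 := rfl

lemma Amat_mul_apply {N : ℕ} (M : Matrix (Fin N) (Fin N) ℂ) (m n : Fin N) :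
    (Amat N * M) m n =
      2 * (if h : (m:ℕ) ≠ 0 then M ⟨(m:ℕ)-1, by omega⟩ n else 0) := by
  rw [Matrix.mul_apply]
  by_cases hm : (m:ℕ) = 0
  · simp [Amat, hm]
  · rw [dif_pos hm]
    rw [Finset.sum_eq_single (⟨(m:ℕ)-1, by omega⟩ : Fin N)]
    · simp only [Amat, Matrix.of_apply]
      rw [if_pos (show (m:ℕ) = (m:ℕ)-1+1 by omega)]
    · intro b _ hb
      have : (m:ℕ) ≠ (b:ℕ) + 1 := by
        intro h; apply hb; apply Fin.ext; simp; omega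
      simp [Amat, this]
    · simp

/-- Pure scalar/ℕ version of the key identity. -/
lemma natkey (z : ℂ) (m n : ℕ) :
    ((m:ℂ)+1) * (if n ≤ m then hfun z (m-n) else 0)
      + (1/2 : ℂ) * (2 * (if 1 ≤ m then 2 *
          (if 1 ≤ m-1 then (if n ≤ m-1-1 then hfun z (m-1-1-n) else 0) else 0) else 0))
      - z * (2 * (if 1 ≤ m then (if n ≤ m-1 then hfun z (m-1-n) else 0) else 0))
    = (if n ≤ m then hfun z (m-n) else 0) * ((n:ℂ)+1) := by
  rcases Nat.lt_or_ge m n with hmn | hmn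
  · rw [if_neg (by omega)]
    split_ifs <;> first | omega | ring
  · rcases Nat.lt_or_ge (m - n) 2 with hk | hk
    · rcases Nat.lt_or_ge (m - n) 1 with hk0 | hk1
      · have hmn' : m = n := by omega
        subst hmn'
        rw [Nat.sub_self]
        split_ifs <;> first | omega | ring
      · have hmn' : m = n + 1 := by omega
        subst hmn'
        rw [show n+1-n = 1 from by omega, show n+1-1 = n from by omega, Nat.sub_self]
        split_ifs <;> first | omega | (rw [hfun_zero, hfun_one]; push_cast; ring)
    · obtain ⟨k, hk2⟩ : ∃ k, m = n + 2 + k := ⟨m-n-2, by omega⟩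
      subst hk2
      rw [show n+2+k-n = k+2 from by omega, show n+2+k-1-1-n = k from by omega,
        show n+2+k-1-n = k+1 from by omega]
      split_ifs <;> first | omega | (push_cast; linear_combination hfun_rec z k)

lemma key (N : ℕ) (z : ℂ) :
    (Jmat N + (1/2 : ℂ) • (Amat N)^2 - z • Amat N) * Lmat N z = Lmat N z * Jmat N := by
  have hA : ∀ p q : Fin N, (Amat N * Lmat N z) p q =
      2 * (if 1 ≤ (p:ℕ) then (if (q:ℕ) ≤ (p:ℕ)-1 then hfun z ((p:ℕ)-1-(q:ℕ)) else 0) else 0) := by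
    intro p q
    rw [Amat_mul_apply]
    by_cases hp : (p:ℕ) = 0
    · rw [dif_neg (by omega), if_neg (by omega)]
    · rw [dif_pos (by simpa using hp), if_pos (by omega), Lmat_apply]
  have hAA : ∀ p q : Fin N, (Amat N * (Amat N * Lmat N z)) p q =
      2 * (if 1 ≤ (p:ℕ) then 2 * (if 1 ≤ (p:ℕ)-1 then
        (if (q:ℕ) ≤ (p:ℕ)-1-1 then hfun z ((p:ℕ)-1-1-(q:ℕ)) else 0) else 0) else 0) := by
    intro p q
    rw [Amat_mul_apply]
    by_cases hp : (p:ℕ) = 0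
    · rw [dif_neg (by omega), if_neg (by omega)]
    · rw [dif_pos (by simpa using hp), if_pos (by omega), hA]
  ext m n
  rw [Matrix.sub_mul, Matrix.add_mul, Matrix.smul_mul, Matrix.smul_mul, sq, Matrix.mul_assoc]
  rw [Matrix.sub_apply, Matrix.add_apply, Matrix.smul_apply, Matrix.smul_apply,
    hAA, hA, Jmat, Matrix.diagonal_mul, Matrix.mul_diagonal]
  rw [smul_eq_mul, smul_eq_mul]
  exact natkey z m n

section assembly
variable {N : ℕ} (α : Fin N → ℝ)

lemma Smat_det_isUnit (hα : ∀ k, α k ≠ 0) : IsUnit (Smat α).det := by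
  rw [Smat, Matrix.det_diagonal]
  exact isUnit_iff_ne_zero.mpr
    (Finset.prod_ne_zero_iff.mpr fun k _ => by exact_mod_cast hα k)

lemma Smat_inv_eq (hα : ∀ k, α k ≠ 0) :
    (Smat α)⁻¹ = Matrix.diagonal fun k => ((α k : ℂ))⁻¹ := by
  apply Matrix.inv_eq_right_inv
  rw [Smat, Matrix.diagonal_mul_diagonal, ← Matrix.diagonal_one]
  exact congrArg Matrix.diagonal
    (funext fun k => mul_inv_cancel₀ (by exact_mod_cast hα k))

lemma Jmat_comm_Smat : Jmat N * Smat α = Smat α * Jmat N := by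
  rw [Jmat, Smat, Matrix.diagonal_mul_diagonal, Matrix.diagonal_mul_diagonal]
  exact congrArg Matrix.diagonal (funext fun k => by ring)

lemma Jmat_comm_Smat_inv (hα : ∀ k, α k ≠ 0) :
    Jmat N * (Smat α)⁻¹ = (Smat α)⁻¹ * Jmat N := by
  rw [Smat_inv_eq α hα, Jmat, Matrix.diagonal_mul_diagonal, Matrix.diagonal_mul_diagonal]
  exact congrArg Matrix.diagonal (funext fun k => by ring)

lemma keyAlpha (hα : ∀ k, α k ≠ 0) (x : ℝ) :
    (Jmat N + (1/2 : ℂ) • (AmatAlpha α)^2 - (x:ℂ) • AmatAlpha α) * LmatAlpha α x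
      = LmatAlpha α x * Jmat N := by
  haveI : Invertible (Smat α) := (Smat α).invertibleOfIsUnitDet (Smat_det_isUnit α hα)
  have hA2 : (AmatAlpha α)^2 = Smat α * (Amat N)^2 * (Smat α)⁻¹ := by
    rw [sq, sq, AmatAlpha]
    simp only [Matrix.mul_assoc, Matrix.inv_mul_cancel_left_of_invertible]
  have hB : Jmat N + (1/2 : ℂ) • (AmatAlpha α)^2 - (x:ℂ) • AmatAlpha α
      = Smat α * (Jmat N + (1/2 : ℂ) • (Amat N)^2 - (x:ℂ) • Amat N) * (Smat α)⁻¹ := by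
    rw [hA2, AmatAlpha]
    rw [Matrix.mul_sub, Matrix.mul_add, Matrix.sub_mul, Matrix.add_mul]
    rw [Matrix.mul_smul, Matrix.mul_smul, Matrix.smul_mul, Matrix.smul_mul]
    congr 2
    rw [← Jmat_comm_Smat, Matrix.mul_inv_cancel_right_of_invertible]
  rw [hB, LmatAlpha]
  calc (Smat α * (Jmat N + (1/2 : ℂ) • (Amat N)^2 - (x:ℂ) • Amat N) * (Smat α)⁻¹) *
        (Smat α * Lmat N (x:ℂ) * (Smat α)⁻¹)
      = Smat α * (((Jmat N + (1/2 : ℂ) • (Amat N)^2 - (x:ℂ) • Amat N) * Lmat N (x:ℂ)) *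
          (Smat α)⁻¹) := by
        simp only [Matrix.mul_assoc, Matrix.inv_mul_cancel_left_of_invertible]
    _ = Smat α * (Lmat N (x:ℂ) * (Jmat N * (Smat α)⁻¹)) := by
        rw [key N (x:ℂ), Matrix.mul_assoc]
    _ = Smat α * Lmat N (x:ℂ) * (Smat α)⁻¹ * Jmat N := by
        rw [Jmat_comm_Smat_inv α hα]
        simp only [Matrix.mul_assoc]

lemma Jmat_conjTranspose : (Jmat N)ᴴ = Jmat N := by
  ext i j
  rcases eq_or_ne i j with rfl | h
  · simp only [Jmat, Matrix.conjTranspose_apply, Matrix.diagonal_apply_eq]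
    rw [show (((i:ℕ):ℂ) + 1) = ((((i:ℕ):ℝ)+1 : ℝ) : ℂ) by push_cast; ring]
    exact Complex.conj_ofReal _
  · simp [Jmat, Matrix.conjTranspose_apply, Matrix.diagonal_apply_ne, h, Ne.symm h]

lemma keyStar (hα : ∀ k, α k ≠ 0) (x : ℝ) :
    (LmatAlpha α x)ᴴ * (Jmat N + (1/2 : ℂ) • ((AmatAlpha α)ᴴ)^2 - (x:ℂ) • (AmatAlpha α)ᴴ)
      = Jmat N * (LmatAlpha α x)ᴴ := by
  have h := congrArg Matrix.conjTranspose (keyAlpha α hα x)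
  rw [Matrix.conjTranspose_mul, Matrix.conjTranspose_mul, Jmat_conjTranspose] at h
  rw [Matrix.conjTranspose_sub, Matrix.conjTranspose_add, Jmat_conjTranspose,
    Matrix.conjTranspose_smul, Matrix.conjTranspose_smul] at h
  have e1 : ((AmatAlpha α (N := N))^2)ᴴ = ((AmatAlpha α)ᴴ)^2 := by
    rw [sq, sq, Matrix.conjTranspose_mul]
  rw [e1] at h
  have e2 : star (1/2 : ℂ) = (1/2 : ℂ) := by simp
  have e3 : star (x : ℂ) = (x : ℂ) := Complex.conj_ofReal x
  rw [e2, e3] at h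
  exact h
end assembly

lemma Lmat_det (N : ℕ) (z : ℂ) : (Lmat N z).det = 1 := by
  rw [Matrix.det_of_lowerTriangular (Lmat N z)
    (fun i j (hij : (OrderDual.toDual j) < OrderDual.toDual i) => by
      have : (i:ℕ) < (j:ℕ) := hij
      exact if_neg (by omega))]
  have : ∀ i : Fin N, Lmat N z i i = 1 := fun i => by
    show (if (i:ℕ) ≤ (i:ℕ) then _ else 0) = 1
    rw [if_pos (le_refl _)]
    have := hfun_zero z
    rw [Nat.sub_self]
    simpa [hfun] using this
  simp [this]

lemma Wmat_det_isUnit {N : ℕ} (α : Fin N → ℝ) (hα : ∀ k, α k ≠ 0)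
    (δ : Fin N → ℝ) (hδ : ∀ k, 0 < δ k) (x : ℝ) : IsUnit (Wmat α δ x).det := by
  haveI : Invertible (Smat α) := (Smat α).invertibleOfIsUnitDet (Smat_det_isUnit α hα)
  rw [Wmat, Matrix.det_smul, Matrix.det_mul, Matrix.det_mul, Matrix.det_conjTranspose,
    LmatAlpha, Matrix.det_mul, Matrix.det_mul, Lmat_det, Matrix.det_diagonal]
  rw [isUnit_iff_ne_zero]
  have hS : (Smat α).det ≠ 0 := (Smat_det_isUnit α hα).ne_zero
  have hSi : ((Smat α)⁻¹).det ≠ 0 := by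
    rw [Matrix.det_nonsing_inv, Ring.inverse_eq_inv]
    exact inv_ne_zero hS
  have he : ((Real.exp (-x^2) : ℝ) : ℂ) ≠ 0 :=
    Complex.ofReal_ne_zero.mpr (Real.exp_ne_zero _)
  have hp : (∏ k, ((δ k : ℝ) : ℂ)) ≠ 0 :=
    Finset.prod_ne_zero_iff.mpr fun k _ => by
      exact_mod_cast (hδ k).ne'
  apply mul_ne_zero (pow_ne_zero _ he)
  apply mul_ne_zero
  apply mul_ne_zero
  · exact mul_ne_zero (mul_ne_zero hS (by simp)) hSi
  · exact hp
  · exact star_ne_zero.mpr (mul_ne_zero (mul_ne_zero hS one_ne_zero) hSi)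


lemma Wstep {N : ℕ} (α : Fin N → ℝ) (hα : ∀ k, α k ≠ 0) (δ : Fin N → ℝ)
    (c d : ℝ) (x : ℝ) :
    Wmat α δ x * ((d:ℂ) • (Jmat N + (1/2 : ℂ) • ((AmatAlpha α)ᴴ)^2 - (x:ℂ) • (AmatAlpha α)ᴴ)
        + (c:ℂ) • (1 : Matrix (Fin N) (Fin N) ℂ))
      = Wmat α (fun i => (d * ((i:ℕ)+1) + c) * δ i) x := by
  rw [Wmat, Wmat, Matrix.smul_mul]
  congr 1
  have hK : (LmatAlpha α x)ᴴ *
      ((d:ℂ) • (Jmat N + (1/2 : ℂ) • ((AmatAlpha α)ᴴ)^2 - (x:ℂ) • (AmatAlpha α)ᴴ)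
        + (c:ℂ) • (1 : Matrix (Fin N) (Fin N) ℂ))
      = ((d:ℂ) • Jmat N + (c:ℂ) • (1 : Matrix (Fin N) (Fin N) ℂ)) * (LmatAlpha α x)ᴴ := by
    rw [Matrix.mul_add, Matrix.add_mul, Matrix.mul_smul, Matrix.mul_smul,
      Matrix.smul_mul, Matrix.smul_mul, keyStar α hα x, Matrix.mul_one, Matrix.one_mul]
  have hdiag : (Matrix.diagonal fun k => ((δ k : ℝ):ℂ)) *
      ((d:ℂ) • Jmat N + (c:ℂ) • (1 : Matrix (Fin N) (Fin N) ℂ))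
      = Matrix.diagonal (fun (k : Fin N) => (((d * ((k:ℕ)+1) + c) * δ k : ℝ) : ℂ)) := by
    rw [Jmat, ← Matrix.diagonal_one, ← Matrix.diagonal_smul, ← Matrix.diagonal_smul,
      Matrix.diagonal_add, Matrix.diagonal_mul_diagonal]
    exact congrArg Matrix.diagonal (funext fun k => by
      simp only [Pi.add_apply, Pi.smul_apply, smul_eq_mul]
      push_cast; ring)
  rw [Matrix.mul_assoc (LmatAlpha α x * _), hK, ← Matrix.mul_assoc,
    Matrix.mul_assoc (LmatAlpha α x), hdiag]


/-- Proposition 3.5 (first Pearson equation), with the explicit formula from its proof: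
`(W^{(α,ν)}(x))⁻¹ W^{(α,ν+1)}(x) = d (J + ½((A^α)^*)² - x (A^α)^*) + c I`,
a matrix-valued polynomial of degree one in `x`.  Here
`Δ^{(ν+1)} = (d J + c I) Δ^{(ν)}`. -/
theorem stmt_6 (N : ℕ) (hN : 0 < N) (α : Fin N → ℝ) (hα : ∀ k, α k ≠ 0)
    (hα1 : α ⟨0, hN⟩ = 1) (δ : Fin N → ℝ) (hδ : ∀ k, 0 < δ k)
    (c d : ℝ) (hc : 0 < c) (hd : 0 < d) (x : ℝ) :
    (Wmat α δ x)⁻¹ * Wmat α (fun i => (d * ((i : ℕ) + 1) + c) * δ i) x =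
      (d : ℂ) • (Jmat N + (1 / 2 : ℂ) • ((AmatAlpha α)ᴴ) ^ 2 - (x : ℂ) • (AmatAlpha α)ᴴ) +
        (c : ℂ) • (1 : Matrix (Fin N) (Fin N) ℂ) := by
  rw [← Wstep α hα δ c d x, ← Matrix.mul_assoc,
    Matrix.nonsing_inv_mul _ (Wmat_det_isUnit α hα δ hδ x), Matrix.one_mul]
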